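/- arXiv:2003.09398 — 3 statements merged into one kernel-verified Lean document; each statement's English description precedes it below -/
import Mathlib

section
/- (Constrained policy improvement, core of Theorem 1.) Let D be a constraint structure on a finite MDP with discount factor γ ∈ [0,1), let π be a safe deterministic policy, and let π' be a deterministic policy such that for every state s, π'(s) ∈ D(s) and Q^π(s, π'(s)) = max_{a ∈ D(s)} Q^π(s,a). Then π' is safe and V^{π'}(s) ≥ V^π(s) for every state s. -/
/-- Constrained policy improvement, core of Theorem 1:
If `π` is a safe deterministic policy and `π'` is a deterministic policy which, at every
state `s`, selects an action in `D(s)` attaining `max_{a ∈ D(s)} Q^π(s,a)`, then `π'` is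
safe and `V^{π'}(s) ≥ V^π(s)` for every state `s`. -/
theorem constrained_policy_improvement
    {S A : Type} [Fintype S] [Nonempty S] [Fintype A] [Nonempty A]
    (p : S → A → S → ℝ) (r : S → A → ℝ) (γ : ℝ)
    (hp0 : ∀ s a s', 0 ≤ p s a s')
    (hp1 : ∀ s a, ∑ s', p s a s' = 1)
    (hγ0 : 0 ≤ γ) (hγ1 : γ < 1)
    (D : S → Finset A) (hD : ∀ s, (D s).Nonempty)
    (π π' : S → A) (hπsafe : ∀ s, π s ∈ D s)
    (V V' : S → ℝ)
    (hV : ∀ s, V s = r s (π s) + γ * ∑ s', p s (π s) s' * V s')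
    (hV' : ∀ s, V' s = r s (π' s) + γ * ∑ s', p s (π' s) s' * V' s')
    (hπ'D : ∀ s, π' s ∈ D s)
    (hπ'max : ∀ s, r s (π' s) + γ * ∑ s', p s (π' s) s' * V s' =
        (D s).sup' (hD s) fun a => r s a + γ * ∑ s', p s a s' * V s') :
    (∀ s, π' s ∈ D s) ∧ ∀ s, V s ≤ V' s := by
  refine ⟨hπ'D, ?_⟩
  -- let s0 be a minimizer of V' - V
  obtain ⟨s0, -, hs0⟩ := Finset.exists_min_image Finset.univ (fun s => V' s - V s)
    ⟨Classical.arbitrary S, Finset.mem_univ _⟩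
  set δ := V' s0 - V s0 with hδ
  have hmin : ∀ s, δ ≤ V' s - V s := fun s => hs0 s (Finset.mem_univ s)
  -- Q^π(s0, π' s0) ≥ V s0
  have hQ : V s0 ≤ r s0 (π' s0) + γ * ∑ s', p s0 (π' s0) s' * V s' := by
    rw [hπ'max s0, hV s0]
    exact Finset.le_sup' (fun a => r s0 a + γ * ∑ s', p s0 a s' * V s') (hπsafe s0)
  -- δ ≥ γ * δ
  have hsum : γ * δ ≤ γ * ∑ s', p s0 (π' s0) s' * (V' s' - V s') := by
    apply mul_le_mul_of_nonneg_left _ hγ0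
    calc δ = ∑ s', p s0 (π' s0) s' * δ := by
            rw [← Finset.sum_mul, hp1, one_mul]
      _ ≤ ∑ s', p s0 (π' s0) s' * (V' s' - V s') := by
            apply Finset.sum_le_sum
            intro s' _
            exact mul_le_mul_of_nonneg_left (hmin s') (hp0 _ _ _)
  have hkey : γ * δ ≤ δ := by
    have hexp : γ * ∑ s', p s0 (π' s0) s' * (V' s' - V s') =
        (r s0 (π' s0) + γ * ∑ s', p s0 (π' s0) s' * V' s')
        - (r s0 (π' s0) + γ * ∑ s', p s0 (π' s0) s' * V s') := by
      simp [mul_sub, Finset.sum_sub_distrib, mul_sub, mul_add, Finset.mul_sum]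
    have := hsum
    rw [hexp, ← hV' s0] at this
    have h2 : V' s0 - (r s0 (π' s0) + γ * ∑ s', p s0 (π' s0) s' * V s') ≤ δ := by
      rw [hδ]
      linarith [hQ]
    linarith
  have hδ0 : 0 ≤ δ := by nlinarith
  intro s
  linarith [hmin s]
end

section
/- (Proposition 1: Safe Policy Extraction after Q-learning is not optimal for the constrained MDP.) For every discount factor γ ∈ (0,1) there exist a finite MDP, a constraint structure D with D(s) nonempty for every state s, and a state s₀, such that every deterministic policy π with π(s) ∈ D(s) and Q*(s, π(s)) = max_{a ∈ D(s)} Q*(s,a) for all s — where Q* is the unconstrained optimal Q-function, i.e., the unique fixed point of Q(s,a) = r(s,a) + γ · Σ_{s'} p(s,a,s') · max_{a' ∈ A} Q(s',a') — satisfies V^π(s₀) < V*_D(s₀). -/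
/-- Proposition 1: Safe Policy Extraction after Q-learning is not optimal
for the constrained MDP: For every discount factor `γ ∈ (0,1)` there exist a finite MDP
(with nonempty finite state and action spaces), a constraint structure `D` with `D(s)`
nonempty for every state, and a state `s₀`, such that every deterministic policy `π`
choosing at each state a `Q*`-maximizing action within `D(s)` — where `Q*` is the
unconstrained optimal Q-function, i.e. the unique fixed point of
`Q(s,a) = r(s,a) + γ · ∑_{s'} p(s,a,s') · max_{a'} Q(s',a')` — satisfies
`V^π(s₀) < V*_D(s₀)`. Value functions of policies are encoded via `val`, the
unconstrained per-state maxima of `Q*` via `M`, and the optimal constrained value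
function via `Vstar`. -/
theorem safe_policy_extraction_not_optimal :
    ∀ γ : ℝ, 0 < γ → γ < 1 →
    ∃ (S A : Type) (instS : Fintype S) (instA : Fintype A),
      Nonempty S ∧ Nonempty A ∧
      letI := instS; letI := instA;
      ∃ (p : S → A → S → ℝ) (r : S → A → ℝ) (D : S → Finset A) (s₀ : S),
        (∀ s a s', 0 ≤ p s a s') ∧
        (∀ s a, ∑ s', p s a s' = 1) ∧
        (∀ s, (D s).Nonempty) ∧
        ∀ (val : (S → A) → S → ℝ),
          (∀ π s, val π s = r s (π s) + γ * ∑ s', p s (π s) s' * val π s') →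
          ∀ (Qstar : S → A → ℝ) (M : S → ℝ),
            (∀ s, IsGreatest (Set.range (Qstar s)) (M s)) →
            (∀ s a, Qstar s a = r s a + γ * ∑ s', p s a s' * M s') →
            ∀ (Vstar : S → ℝ),
              (∀ s, IsGreatest
                {x | ∃ π : S → A, (∀ t, π t ∈ D t) ∧ x = val π s} (Vstar s)) →
              ∀ π : S → A,
                (∀ s, π s ∈ D s) →
                (∀ s, ∀ a ∈ D s, Qstar s a ≤ Qstar s (π s)) →
                val π s₀ < Vstar s₀ := by
  intro γ hγ0 hγ1
  have h1γ : (0:ℝ) < 1 - γ := by linarith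
  refine ⟨Fin 3, Bool, inferInstance, inferInstance, ⟨0⟩, ⟨true⟩, ?_⟩
  -- next-state function: from 0, action `true` goes to 1, `false` goes to 2;
  -- states 1 and 2 are absorbing.
  refine ⟨fun s a s' => if s' = (if s = 0 then (if a then 1 else 2) else s) then 1 else 0,
    fun s a => if s = 1 then (if a then 1 else 0) else if s = 2 then 1/2 else 0,
    fun s => if s = 1 then {false} else if s = 2 then {true} else {true, false},
    0, ?_, ?_, ?_, ?_⟩
  · intro s a s'; dsimp only; split_ifs <;> norm_num
  · intro s a
    fin_cases s <;> cases a <;> simp [Fin.sum_univ_three]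
  · intro s; fin_cases s <;> simp
  · intro val hval Qstar M hM hQ Vstar hV π hπD hπQ
    -- π 1 = false
    have hπ1 : π 1 = false := by
      have := hπD 1
      simpa using this
    -- val π 1 = 0
    have hv1 : val π 1 = 0 := by
      have h := hval π 1
      rw [hπ1] at h
      simp [Fin.sum_univ_three] at h
      nlinarith
    -- M 1 = 1/(1-γ)
    have hQ1t : Qstar 1 true = 1 + γ * M 1 := by
      have := hQ 1 true; simpa [Fin.sum_univ_three] using this
    have hQ1f : Qstar 1 false = γ * M 1 := by
      have := hQ 1 false; simpa [Fin.sum_univ_three] using this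
    have hM1 : M 1 = 1 / (1 - γ) := by
      obtain ⟨⟨a, ha⟩, hub⟩ := hM 1
      have ht := hub ⟨true, rfl⟩
      cases a with
      | true => rw [hQ1t] at ha; field_simp; linarith
      | false =>
        rw [hQ1f] at ha
        rw [hQ1t] at ht
        nlinarith
    -- M 2 = 1/(2*(1-γ))
    have hQ2 : ∀ a, Qstar 2 a = 1/2 + γ * M 2 := by
      intro a
      have := hQ 2 a; cases a <;> simpa [Fin.sum_univ_three] using this
    have hM2 : M 2 = 1 / (2 * (1 - γ)) := by
      obtain ⟨⟨a, ha⟩, hub⟩ := hM 2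
      rw [hQ2 a] at ha
      field_simp
      linarith
    -- Qstar at state 0
    have hQ0t : Qstar 0 true = γ * M 1 := by
      have := hQ 0 true; simpa [Fin.sum_univ_three] using this
    have hQ0f : Qstar 0 false = γ * M 2 := by
      have := hQ 0 false; simpa [Fin.sum_univ_three] using this
    have hM21 : M 2 < M 1 := by
      rw [hM1, hM2]
      rw [div_lt_div_iff₀ (by linarith) h1γ]
      nlinarith
    -- π 0 = true
    have hπ0 : π 0 = true := by
      by_contra h
      rw [Bool.not_eq_true] at h
      have hf : π 0 = false := h
      have := hπQ 0 true (by simp)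
      rw [hf, hQ0t, hQ0f] at this
      nlinarith
    -- val π 0 = 0
    have hv0 : val π 0 = 0 := by
      have h := hval π 0
      rw [hπ0] at h
      simp [Fin.sum_univ_three] at h
      rw [h, hv1]; ring
    -- generic Bellman facts
    have key2 : ∀ ρ : Fin 3 → Bool, val ρ 2 = 1/2 + γ * val ρ 2 := by
      intro ρ
      have h := hval ρ 2
      cases hb : ρ 2 <;> rw [hb] at h <;> simpa [Fin.sum_univ_three] using h
    have key0f : ∀ ρ : Fin 3 → Bool, ρ 0 = false → val ρ 0 = γ * val ρ 2 := by
      intro ρ hb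
      have h := hval ρ 0
      rw [hb] at h
      simpa [Fin.sum_univ_three] using h
    -- the good safe policy σ
    have hσD : ∀ t : Fin 3, (fun s : Fin 3 => if s = 2 then true else false) t
        ∈ (fun s => if s = 1 then ({false} : Finset Bool)
        else if s = 2 then {true} else {true, false}) t := by
      intro t; fin_cases t <;> simp
    have hσ2 : val (fun s : Fin 3 => if s = 2 then true else false) 2
        = 1 / (2 * (1 - γ)) := by
      have h := key2 (fun s : Fin 3 => if s = 2 then true else false)
      rw [eq_div_iff (by positivity : (2 * (1 - γ)) ≠ 0)]
      linarith
    have hσ0 : val (fun s : Fin 3 => if s = 2 then true else false) 0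
        = γ * (1 / (2 * (1 - γ))) := by
      have h := key0f (fun s : Fin 3 => if s = 2 then true else false) rfl
      rw [h, hσ2]
    have hle : val (fun s : Fin 3 => if s = 2 then true else false) 0 ≤ Vstar 0 :=
      (hV 0).2 ⟨_, hσD, rfl⟩
    have hpos : 0 < val (fun s : Fin 3 => if s = 2 then true else false) 0 := by
      rw [hσ0]; positivity
    rw [hv0]
    linarith
end

section
/- (The counterexample of Figure 3, providing the proof of Proposition 1.) Consider the finite deterministic MDP with states {s₀,…,s₁₁, t}, actions {a, b}, and deterministic transitions: s₀ → s₁ under both actions; from s₁, action a leads to s₂ and action b leads to s₃; s₂ → s₄, s₃ → s₅, s₅ → s₈, s₆ → s₉, s₇ → s₁₀, s₈ → s₁₁ under both actions; from s₄, action a leads to s₆ and action b leads to s₇; and s₉, s₁₀, s₁₁, t all lead to the absorbing state t under both actions. All rewards are 0 except r(s₆, a) = r(s₆, b) = 3, r(s₇, a) = r(s₇, b) = 1, r(s₈, a) = r(s₈, b) = 2. The constraint structure is D(s₄) = {b} (since state s₆ is unsafe) and D(s) = {a, b} for every other state. Then for every γ ∈ (0,1): (i) the unconstrained optimal value at s₀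 is 3γ⁴; (ii) the optimal constrained value is V*_D(s₀) = 2γ⁴; and (iii) every deterministic policy π with π(s) ∈ D(s) and Q*(s,π(s)) = max_{a∈D(s)} Q*(s,a) for all s (Q* being the unconstrained optimal Q-function) satisfies V^π(s₀) = γ⁴, which is strictly less than V*_D(s₀). -/
/-- Deterministic successor function of the MDP of Figure 3. States `0,…,11` are
`s₀,…,s₁₁` and state `12` is the absorbing state `t`; action `0` is `a`, action `1`
is `b`. -/
def fig3Next : Fin 13 → Fin 2 → Fin 13 := fun s a =>
  match s.val, a.val with
  | 0, _ => 1
  | 1, 0 => 2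
  | 1, 1 => 3
  | 2, _ => 4
  | 3, _ => 5
  | 4, 0 => 6
  | 4, 1 => 7
  | 5, _ => 8
  | 6, _ => 9
  | 7, _ => 10
  | 8, _ => 11
  | _, _ => 12

/-- Transition kernel of the MDP of Figure 3: point mass on the deterministic successor. -/
noncomputable def fig3P : Fin 13 → Fin 2 → Fin 13 → ℝ := fun s a s' =>
  if s' = fig3Next s a then 1 else 0

/-- Reward function of the MDP of Figure 3: all rewards are `0` except
`r(s₆,·) = 3`, `r(s₇,·) = 1`, `r(s₈,·) = 2`. -/
noncomputable def fig3R : Fin 13 → Fin 2 → ℝ := fun s _ =>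
  if s.val = 6 then 3 else if s.val = 7 then 1 else if s.val = 8 then 2 else 0

/-- Constraint structure of Figure 3: state `s₆` is unsafe, so `D(s₄) = {b}`;
every other state allows both actions. -/
def fig3D : Fin 13 → Finset (Fin 2) := fun s =>
  if s.val = 4 then {1} else Finset.univ

lemma fig3_sum_pm (s : Fin 13) (a : Fin 2) (f : Fin 13 → ℝ) :
    ∑ s', fig3P s a s' * f s' = f (fig3Next s a) := by
  simp [fig3P, ite_mul]

lemma fig3_sup2 (f : Fin 2 → ℝ) (h : (Finset.univ : Finset (Fin 2)).Nonempty) :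
    Finset.univ.sup' h f = max (f 0) (f 1) := by
  apply le_antisymm
  · apply Finset.sup'_le
    intro b _
    fin_cases b
    · exact le_max_left _ _
    · exact le_max_right _ _
  · exact max_le (Finset.le_sup' _ (by decide)) (Finset.le_sup' _ (by decide))

/-- the counterexample of Figure 3, proving Proposition 1: in the MDP above,
for every `γ ∈ (0,1)`:
(i) the unconstrained optimal value at `s₀` is `3γ⁴`;
(ii) the optimal constrained value is `V*_D(s₀) = 2γ⁴`; and
(iii) every deterministic policy `π` that is greedy over the safe sets `D(s)` with respect
to the unconstrained optimal Q-function `Q*` satisfies `V^π(s₀) = γ⁴ < V*_D(s₀)`.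
Here `val` assigns to each deterministic policy the unique solution of its Bellman
equation, `Qstar` is the unique fixed point of the unconstrained Bellman optimality
operator, and `Vstar` is the optimal constrained value function. -/
theorem figure3_counterexample
    (γ : ℝ) (hγ0 : 0 < γ) (hγ1 : γ < 1)
    (hD : ∀ s, (fig3D s).Nonempty)
    (val : (Fin 13 → Fin 2) → Fin 13 → ℝ)
    (hval : ∀ π s, val π s =
      fig3R s (π s) + γ * ∑ s', fig3P s (π s) s' * val π s')
    (Qstar : Fin 13 → Fin 2 → ℝ)
    (hQstar : ∀ s a, Qstar s a =
      fig3R s a + γ * ∑ s', fig3P s a s' *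
        Finset.univ.sup' Finset.univ_nonempty (Qstar s'))
    (Vstar : Fin 13 → ℝ)
    (hVstar : ∀ s, IsGreatest
      {x | ∃ π : Fin 13 → Fin 2, (∀ t, π t ∈ fig3D t) ∧ x = val π s} (Vstar s)) :
    Finset.univ.sup' Finset.univ_nonempty (Qstar 0) = 3 * γ ^ 4 ∧
    Vstar 0 = 2 * γ ^ 4 ∧
    ∀ π : Fin 13 → Fin 2,
      (∀ s, π s ∈ fig3D s) →
      (∀ s, Qstar s (π s) = (fig3D s).sup' (hD s) (Qstar s)) →
      val π 0 = γ ^ 4 ∧ val π 0 < Vstar 0 := by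
  have hγ2 : (0:ℝ) < γ ^ 2 := pow_pos hγ0 2
  have hγ3 : (0:ℝ) < γ ^ 3 := pow_pos hγ0 3
  have hγ4 : (0:ℝ) < γ ^ 4 := pow_pos hγ0 4
  have hQ : ∀ s a, Qstar s a = fig3R s a +
      γ * max (Qstar (fig3Next s a) 0) (Qstar (fig3Next s a) 1) := by
    intro s a
    rw [hQstar s a, fig3_sum_pm, fig3_sup2]
  have hv : ∀ π s, val π s = fig3R s (π s) + γ * val π (fig3Next s (π s)) := by
    intro π s
    rw [hval π s, fig3_sum_pm]
  have n0 : ∀ a : Fin 2, fig3Next 0 a = 1 := by decide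
  have n2 : ∀ a : Fin 2, fig3Next 2 a = 4 := by decide
  have n3 : ∀ a : Fin 2, fig3Next 3 a = 5 := by decide
  have n5 : ∀ a : Fin 2, fig3Next 5 a = 8 := by decide
  have n6 : ∀ a : Fin 2, fig3Next 6 a = 9 := by decide
  have n7 : ∀ a : Fin 2, fig3Next 7 a = 10 := by decide
  have n8 : ∀ a : Fin 2, fig3Next 8 a = 11 := by decide
  have n9 : ∀ a : Fin 2, fig3Next 9 a = 12 := by decide
  have n10 : ∀ a : Fin 2, fig3Next 10 a = 12 := by decide
  have n11 : ∀ a : Fin 2, fig3Next 11 a = 12 := by decide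
  have n12 : ∀ a : Fin 2, fig3Next 12 a = 12 := by decide
  have two_cases : ∀ x : Fin 2, x = 0 ∨ x = 1 := by decide
  -- Q* values
  have q12 : ∀ a : Fin 2, Qstar 12 a = 0 := by
    have h0 := hQ 12 0
    have h1 := hQ 12 1
    rw [n12 0, show fig3R 12 0 = 0 from rfl, zero_add] at h0
    rw [n12 1, show fig3R 12 1 = 0 from rfl, zero_add] at h1
    have heq : Qstar 12 0 = Qstar 12 1 := h0.trans h1.symm
    rw [← heq, max_self] at h0
    have hz : (1 - γ) * Qstar 12 0 = 0 := by linarith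
    have hm : Qstar 12 0 = 0 := by
      rcases mul_eq_zero.mp hz with h | h
      · linarith
      · exact h
    intro a
    rcases two_cases a with h | h
    · rw [h]; exact hm
    · rw [h, ← heq]; exact hm
  have q9 : ∀ a : Fin 2, Qstar 9 a = 0 := by
    intro a
    rw [hQ 9 a, n9 a, q12 0, q12 1, show fig3R 9 a = 0 from rfl]
    simp
  have q10 : ∀ a : Fin 2, Qstar 10 a = 0 := by
    intro a
    rw [hQ 10 a, n10 a, q12 0, q12 1, show fig3R 10 a = 0 from rfl]
    simp
  have q11 : ∀ a : Fin 2, Qstar 11 a = 0 := by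
    intro a
    rw [hQ 11 a, n11 a, q12 0, q12 1, show fig3R 11 a = 0 from rfl]
    simp
  have q6 : ∀ a : Fin 2, Qstar 6 a = 3 := by
    intro a
    rw [hQ 6 a, n6 a, q9 0, q9 1, show fig3R 6 a = 3 from rfl]
    simp
  have q7 : ∀ a : Fin 2, Qstar 7 a = 1 := by
    intro a
    rw [hQ 7 a, n7 a, q10 0, q10 1, show fig3R 7 a = 1 from rfl]
    simp
  have q8 : ∀ a : Fin 2, Qstar 8 a = 2 := by
    intro a
    rw [hQ 8 a, n8 a, q11 0, q11 1, show fig3R 8 a = 2 from rfl]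
    simp
  have q5 : ∀ a : Fin 2, Qstar 5 a = 2 * γ := by
    intro a
    rw [hQ 5 a, n5 a, q8 0, q8 1, show fig3R 5 a = 0 from rfl, max_self]
    ring
  have q40 : Qstar 4 0 = 3 * γ := by
    rw [hQ 4 0, show fig3Next 4 0 = 6 from rfl, q6 0, q6 1,
      show fig3R 4 0 = 0 from rfl, max_self]
    ring
  have q41 : Qstar 4 1 = γ := by
    rw [hQ 4 1, show fig3Next 4 1 = 7 from rfl, q7 0, q7 1,
      show fig3R 4 1 = 0 from rfl, max_self]
    ring
  have q2 : ∀ a : Fin 2, Qstar 2 a = 3 * γ ^ 2 := by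
    intro a
    rw [hQ 2 a, n2 a, q40, q41, show fig3R 2 a = 0 from rfl,
      max_eq_left (by linarith : γ ≤ 3 * γ)]
    ring
  have q3 : ∀ a : Fin 2, Qstar 3 a = 2 * γ ^ 2 := by
    intro a
    rw [hQ 3 a, n3 a, q5 0, q5 1, show fig3R 3 a = 0 from rfl, max_self]
    ring
  have q1a : Qstar 1 0 = 3 * γ ^ 3 := by
    rw [hQ 1 0, show fig3Next 1 0 = 2 from rfl, q2 0, q2 1,
      show fig3R 1 0 = 0 from rfl, max_self]
    ring
  have q1b : Qstar 1 1 = 2 * γ ^ 3 := by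
    rw [hQ 1 1, show fig3Next 1 1 = 3 from rfl, q3 0, q3 1,
      show fig3R 1 1 = 0 from rfl, max_self]
    ring
  have q0 : ∀ a : Fin 2, Qstar 0 a = 3 * γ ^ 4 := by
    intro a
    rw [hQ 0 a, n0 a, q1a, q1b, show fig3R 0 a = 0 from rfl,
      max_eq_left (by nlinarith : 2 * γ ^ 3 ≤ 3 * γ ^ 3)]
    ring
  -- values of constrained policies
  have key : ∀ π : Fin 13 → Fin 2, (∀ s, π s ∈ fig3D s) →
      (π 1 = 0 → val π 0 = γ ^ 4) ∧ (π 1 = 1 → val π 0 = 2 * γ ^ 4) := by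
    intro π hπ
    have v12 : val π 12 = 0 := by
      have h := hv π 12
      rw [n12 (π 12), show fig3R 12 (π 12) = 0 from rfl, zero_add] at h
      have hz : (1 - γ) * val π 12 = 0 := by linarith
      rcases mul_eq_zero.mp hz with h' | h'
      · linarith
      · exact h'
    have v10 : val π 10 = 0 := by
      rw [hv π 10, n10 (π 10), v12, show fig3R 10 (π 10) = 0 from rfl]; ring
    have v11 : val π 11 = 0 := by
      rw [hv π 11, n11 (π 11), v12, show fig3R 11 (π 11) = 0 from rfl]; ring
    have v8 : val π 8 = 2 := by
      rw [hv π 8, n8 (π 8), v11, show fig3R 8 (π 8) = 2 from rfl]; ring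
    have v7 : val π 7 = 1 := by
      rw [hv π 7, n7 (π 7), v10, show fig3R 7 (π 7) = 1 from rfl]; ring
    have v5 : val π 5 = 2 * γ := by
      rw [hv π 5, n5 (π 5), v8, show fig3R 5 (π 5) = 0 from rfl]; ring
    have h4 : π 4 = 1 := Finset.mem_singleton.mp (hπ 4)
    have v4 : val π 4 = γ := by
      rw [hv π 4, h4, show fig3Next 4 1 = 7 from rfl, v7,
        show fig3R 4 1 = 0 from rfl]; ring
    have v2 : val π 2 = γ ^ 2 := by
      rw [hv π 2, n2 (π 2), v4, show fig3R 2 (π 2) = 0 from rfl]; ring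
    have v3 : val π 3 = 2 * γ ^ 2 := by
      rw [hv π 3, n3 (π 3), v5, show fig3R 3 (π 3) = 0 from rfl]; ring
    constructor
    · intro h1
      have v1 : val π 1 = γ ^ 3 := by
        rw [hv π 1, h1, show fig3Next 1 0 = 2 from rfl, v2,
          show fig3R 1 0 = 0 from rfl]; ring
      rw [hv π 0, n0 (π 0), v1, show fig3R 0 (π 0) = 0 from rfl]; ring
    · intro h1
      have v1 : val π 1 = 2 * γ ^ 3 := by
        rw [hv π 1, h1, show fig3Next 1 1 = 3 from rfl, v3,
          show fig3R 1 1 = 0 from rfl]; ring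
      rw [hv π 0, n0 (π 0), v1, show fig3R 0 (π 0) = 0 from rfl]; ring
  -- part (ii)
  have hπ1 : ∀ s, (fun _ : Fin 13 => (1 : Fin 2)) s ∈ fig3D s := by decide
  have hVmem := (hVstar 0).1
  have hVub := (hVstar 0).2
  have hVle : Vstar 0 ≤ 2 * γ ^ 4 := by
    obtain ⟨π', hπ', hval'⟩ := hVmem
    rcases two_cases (π' 1) with h | h
    · rw [hval', (key π' hπ').1 h]; linarith
    · rw [hval', (key π' hπ').2 h]
  have hVge : 2 * γ ^ 4 ≤ Vstar 0 := by
    apply hVub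
    exact ⟨fun _ => 1, hπ1, ((key _ hπ1).2 rfl).symm⟩
  have hV : Vstar 0 = 2 * γ ^ 4 := le_antisymm hVle hVge
  refine ⟨?_, hV, ?_⟩
  · rw [fig3_sup2, q0 0, q0 1, max_self]
  · intro π hπ hg
    have hg1 := hg 1
    have hs : (fig3D 1).sup' (hD 1) (Qstar 1) = max (Qstar 1 0) (Qstar 1 1) :=
      fig3_sup2 (Qstar 1) (hD 1)
    rw [hs, q1a, q1b, max_eq_left (by nlinarith : 2 * γ ^ 3 ≤ 3 * γ ^ 3)] at hg1
    have h1 : π 1 = 0 := by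
      rcases two_cases (π 1) with h | h
      · exact h
      · rw [h, q1b] at hg1
        nlinarith
    have hval0 : val π 0 = γ ^ 4 := (key π hπ).1 h1
    exact ⟨hval0, by rw [hval0, hV]; nlinarith⟩
end
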